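/- arXiv:1712.06300 — 3 statements merged into one kernel-verified Lean document; each statement's English description precedes it below -/
import Mathlib

section
/- Every regular continuum is finitely Suslinian. -/
open scoped ENNReal

open Set Metric

lemma preconn_meets_frontier {X : Type*} [TopologicalSpace X] {A u : Set X}
    (hA : IsPreconnected A) (h1 : (A ∩ u).Nonempty) (h2 : (A ∩ uᶜ).Nonempty) :
    (A ∩ frontier u).Nonempty := by
  by_contra h
  rw [Set.not_nonempty_iff_eq_empty] at h
  have hsub : A ⊆ interior u ∪ interior uᶜ := by
    intro x hx
    by_cases hxu : x ∈ closure u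
    · by_cases hxc : x ∈ closure uᶜ
      · exfalso
        have hmem : x ∈ A ∩ frontier u := ⟨hx, by
          rw [frontier_eq_closure_inter_closure]; exact ⟨hxu, hxc⟩⟩
        rw [h] at hmem
        exact hmem
      · left; simpa [closure_compl] using hxc
    · right; rw [interior_compl]; exact hxu
  have h1' : (A ∩ interior u).Nonempty := by
    obtain ⟨x, hxA, hxu⟩ := h1
    rcases hsub hxA with h' | h'
    · exact ⟨x, hxA, h'⟩
    · exact absurd hxu (interior_subset h')
  have h2' : (A ∩ interior uᶜ).Nonempty := by
    obtain ⟨x, hxA, hxu⟩ := h2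
    rcases hsub hxA with h' | h'
    · exact absurd (interior_subset h') hxu
    · exact ⟨x, hxA, h'⟩
  obtain ⟨x, hxA, hx1, hx2⟩ := hA (interior u) (interior uᶜ) isOpen_interior
    isOpen_interior hsub h1' h2'
  exact (interior_subset hx2) (interior_subset hx1)

theorem regular_continuum_finitelySuslinian
    (X : Type*) [MetricSpace X] [CompactSpace X] [ConnectedSpace X]
    (hreg : ∀ x : X, ∀ V ∈ nhds x, ∃ U ∈ nhds x, U ⊆ V ∧
      (closure U ∩ closure Uᶜ).Finite) :
    ∀ (S : Set (Set X)) (ε : ℝ), 0 < ε →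
      (∀ A ∈ S, IsCompact A ∧ IsConnected A ∧ ε ≤ Metric.diam A) →
      S.Pairwise Disjoint → S.Finite := by
  intro S ε hε hS hdisj
  -- choose for each point a neighborhood of small diameter with finite frontier
  have key : ∀ x : X, ∃ U : Set X, U ∈ nhds x ∧ Metric.diam U < ε ∧
      (closure U ∩ closure Uᶜ).Finite := by
    intro x
    obtain ⟨U, hU, hUV, hfin⟩ := hreg x (Metric.ball x (ε / 3)) (Metric.ball_mem_nhds x (by positivity))
    refine ⟨U, hU, ?_, hfin⟩
    calc Metric.diam U ≤ Metric.diam (Metric.ball x (ε / 3)) := Metric.diam_mono hUV Metric.isBounded_ball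
      _ ≤ 2 * (ε / 3) := Metric.diam_ball (by positivity)
      _ < ε := by linarith
  choose U hUnhds hUdiam hUfin using key
  -- cover X by finitely many interiors
  have hcov : (Set.univ : Set X) ⊆ ⋃ x : X, interior (U x) := by
    intro x _
    exact Set.mem_iUnion.2 ⟨x, mem_interior_iff_mem_nhds.2 (hUnhds x)⟩
  obtain ⟨t, ht⟩ := isCompact_univ.elim_finite_subcover (fun x => interior (U x))
    (fun x => isOpen_interior) hcov
  -- finite set of frontier points
  set F : Set X := ⋃ x ∈ t, closure (U x) ∩ closure (U x)ᶜ with hF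
  have hFfin : F.Finite := Set.Finite.biUnion t.finite_toSet (fun x _ => hUfin x)
  -- every A ∈ S meets F
  have hmeet : ∀ A ∈ S, (A ∩ F).Nonempty := by
    intro A hA
    obtain ⟨hAc, hAconn, hAd⟩ := hS A hA
    obtain ⟨a, ha⟩ := hAconn.nonempty
    obtain ⟨x, hxt, hax⟩ := Set.mem_iUnion₂.1 (ht (Set.mem_univ a))
    have h1 : (A ∩ U x).Nonempty := ⟨a, ha, interior_subset hax⟩
    have h2 : (A ∩ (U x)ᶜ).Nonempty := by
      by_contra h
      rw [Set.not_nonempty_iff_eq_empty, ← Set.disjoint_iff_inter_eq_empty,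
        Set.disjoint_compl_right_iff_subset] at h
      have := Metric.diam_mono h (Metric.isBounded_of_compactSpace)
      linarith [hUdiam x, hAd, this]
    obtain ⟨p, hpA, hpf⟩ := preconn_meets_frontier hAconn.isPreconnected h1 h2
    refine ⟨p, hpA, Set.mem_biUnion hxt ?_⟩
    rwa [frontier_eq_closure_inter_closure] at hpf
  -- injection into the finite set F
  choose! f hf using hmeet
  have hinj : Set.InjOn f S := by
    intro A hA B hB hAB
    by_contra hne
    exact (hdisj hA hB hne).ne_of_mem (hf A hA).1 (hAB ▸ (hf B hB).1) rfl
  have himg : f '' S ⊆ F := by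
    rintro _ ⟨A, hA, rfl⟩
    exact (hf A hA).2
  exact Set.Finite.of_finite_image (hFfin.subset himg) hinj
end

section
/- (Cut Wire Theorem) Let X be a compact metric space and A, B closed subsets of X. If no connected subset of X intersects both A and B, then X can be written as X = X₁ ∪ X₂ where X₁ and X₂ are disjoint closed subsets of X with A ⊆ X₁ and B ⊆ X₂. -/
open Set

theorem cut_wire_theorem
    (X : Type*) [MetricSpace X] [CompactSpace X]
    (A B : Set X) (hA : IsClosed A) (hB : IsClosed B)
    (h : ∀ C : Set X, IsConnected C → C ∩ A = ∅ ∨ C ∩ B = ∅) :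
    ∃ X₁ X₂ : Set X, IsClosed X₁ ∧ IsClosed X₂ ∧ Disjoint X₁ X₂ ∧
      X₁ ∪ X₂ = Set.univ ∧ A ⊆ X₁ ∧ B ⊆ X₂ := by
  -- Step 0: separate points of A from points of B by clopen sets
  have key : ∀ a ∈ A, ∀ b ∈ B, ∃ Z : Set X, IsClopen Z ∧ a ∈ Z ∧ b ∉ Z := by
    intro a ha b hb
    have hbc : b ∉ connectedComponent a := by
      intro hbc
      rcases h (connectedComponent a) isConnected_connectedComponent with h1 | h2
      · exact absurd h1 (Nonempty.ne_empty ⟨a, mem_connectedComponent, ha⟩)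
      · exact absurd h2 (Nonempty.ne_empty ⟨b, hbc, hb⟩)
    rw [connectedComponent_eq_iInter_isClopen, mem_iInter] at hbc
    push_neg at hbc
    obtain ⟨⟨Z, hZ, haZ⟩, hbZ⟩ := hbc
    exact ⟨Z, hZ, haZ, hbZ⟩
  -- Step 1: for each a ∈ A, find a clopen set containing a and disjoint from B
  have step1 : ∀ a ∈ A, ∃ W : Set X, IsClopen W ∧ a ∈ W ∧ W ∩ B = ∅ := by
    intro a ha
    choose Z hZclopen haZ hbZ using fun b (hb : b ∈ B) => key a ha b hb
    have hcover : B ⊆ ⋃ b : B, (Z b b.2)ᶜ :=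
      fun b hb => mem_iUnion.2 ⟨⟨b, hb⟩, hbZ b hb⟩
    obtain ⟨t, ht⟩ := (hB.isCompact).elim_finite_subcover (fun b : B => (Z b b.2)ᶜ)
      (fun b => (hZclopen b b.2).1.isOpen_compl) hcover
    refine ⟨⋂ b ∈ t, Z b b.2, ?_, ?_, ?_⟩
    · exact isClopen_biInter_finset (fun b _ => hZclopen b b.2)
    · exact mem_iInter₂.2 fun b _ => haZ b b.2
    · apply eq_empty_iff_forall_notMem.2
      rintro x ⟨hx1, hx2⟩
      obtain ⟨b, hbt, hbx⟩ := mem_iUnion₂.1 (ht hx2)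
      exact hbx (mem_iInter₂.1 hx1 b hbt)
  -- Step 2: cover A by finitely many such clopen sets
  choose W hWclopen haW hWB using step1
  have hcover : A ⊆ ⋃ a : A, W a a.2 := fun a ha => mem_iUnion.2 ⟨⟨a, ha⟩, haW a ha⟩
  obtain ⟨t, ht⟩ := (hA.isCompact).elim_finite_subcover (fun a : A => W a a.2)
    (fun a => (hWclopen a a.2).2) hcover
  refine ⟨⋃ a ∈ t, W a a.2, (⋃ a ∈ t, W a a.2)ᶜ, ?_, ?_, ?_, ?_, ?_, ?_⟩
  · exact (isClopen_biUnion_finset (fun (a : A) _ => hWclopen a a.2)).1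
  · exact (isClopen_biUnion_finset (fun (a : A) _ => hWclopen a a.2)).2.isClosed_compl
  · exact disjoint_compl_right
  · exact union_compl_self _
  · intro a ha
    obtain ⟨b, hbt, hbx⟩ := mem_iUnion₂.1 (ht ha)
    exact mem_iUnion₂.2 ⟨b, hbt, hbx⟩
  · intro b hb
    simp only [mem_compl_iff, mem_iUnion]
    rintro ⟨a, hat, hbW⟩
    exact absurd (hWB a a.2) (Nonempty.ne_empty ⟨b, hbW, hb⟩)
end

section
/- Let K ⊆ ℂ be a compactum and let U be the open strip bounded by two parallel lines L₁ and L₂. If K ∩ L₁ ≠ ∅ ≠ K ∩ L₂ and no connected subset of K intersects both L₁ and L₂, then there is a separation K = A₁ ∪ A₂ into disjoint compact sets A₁, A₂ such that (closure(Uᵢ) ∩ K) ⊆ Aᵢ for i = 1, 2, where Uᵢ is the component of ℂ \ (L₁ ∪ L₂) whose boundary is Lᵢ. -/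
open Set

lemma clopen_sep {X : Type*} [TopologicalSpace X] [T2Space X] [CompactSpace X]
    {B₁ B₂ : Set X} (h₁ : IsClosed B₁) (h₂ : IsClosed B₂)
    (h : ∀ x ∈ B₁, Disjoint (connectedComponent x) B₂) :
    ∃ V : Set X, IsClopen V ∧ B₁ ⊆ V ∧ Disjoint V B₂ := by
  have step1 : ∀ x ∈ B₁, ∃ U : Set X, IsClopen U ∧ x ∈ U ∧ Disjoint U B₂ := by
    intro x hx
    have hd := h x hx
    rw [connectedComponent_eq_iInter_isClopen x, disjoint_iff_inter_eq_empty] at hd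
    rw [inter_comm] at hd
    obtain ⟨t, ht⟩ := h₂.isCompact.elim_finite_subfamily_closed
      (fun s : { s : Set X // IsClopen s ∧ x ∈ s } => (s : Set X))
      (fun s => s.2.1.1) hd
    refine ⟨⋂ s ∈ t, (s : Set X), isClopen_biInter_finset fun s _ => s.2.1, ?_, ?_⟩
    · exact mem_iInter₂.2 fun s _ => s.2.2
    · rw [disjoint_iff_inter_eq_empty, inter_comm]; exact ht
  choose! U hUclopen hUmem hUdisj using step1
  obtain ⟨t, htB, htfin, ht⟩ := h₁.isCompact.elim_finite_subcover_image
    (fun x hx => (hUclopen x hx).2) (fun x hx => mem_biUnion hx (hUmem x hx))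
  refine ⟨⋃ x ∈ t, U x, ?_, ht, ?_⟩
  · exact htfin.isClopen_biUnion fun x hx => hUclopen x (htB hx)
  · exact disjoint_iUnion₂_left.2 fun x hx => hUdisj x (htB hx)

/- Parallel lines in the plane are encoded as level sets `{z | f z = c}` of a nonzero
real-linear functional `f : ℂ →ₗ[ℝ] ℝ`; the open strip between `{f = c₁}` and `{f = c₂}`
(with `c₁ < c₂`) is `{z | c₁ < f z < c₂}`, and the components `U₁, U₂` of the complement
of the two lines whose boundaries are the lines are `{f < c₁}` and `{f > c₂}`. -/
theorem separation_of_compactum_between_parallel_lines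
    (K : Set ℂ) (hK : IsCompact K)
    (f : ℂ →ₗ[ℝ] ℝ) (hf : f ≠ 0) (c₁ c₂ : ℝ) (hc : c₁ < c₂)
    (h₁ : (K ∩ {z | f z = c₁}).Nonempty) (h₂ : (K ∩ {z | f z = c₂}).Nonempty)
    (hnoconn : ∀ C : Set ℂ, C ⊆ K → IsConnected C →
      ¬((C ∩ {z | f z = c₁}).Nonempty ∧ (C ∩ {z | f z = c₂}).Nonempty)) :
    ∃ A₁ A₂ : Set ℂ, IsCompact A₁ ∧ IsCompact A₂ ∧ Disjoint A₁ A₂ ∧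
      K = A₁ ∪ A₂ ∧
      ({z | f z ≤ c₁} ∩ K) ⊆ A₁ ∧ ({z | c₂ ≤ f z} ∩ K) ⊆ A₂ := by
  have hfc : Continuous f := f.continuous_of_finiteDimensional
  haveI : CompactSpace K := isCompact_iff_compactSpace.mp hK
  set B₁ : Set K := {x : K | f x.val ≤ c₁} with hB₁def
  set B₂ : Set K := {x : K | c₂ ≤ f x.val} with hB₂def
  have hB₁ : IsClosed B₁ := isClosed_le (hfc.comp continuous_subtype_val) continuous_const
  have hB₂ : IsClosed B₂ := isClosed_le continuous_const (hfc.comp continuous_subtype_val)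
  have key : ∀ x ∈ B₁, Disjoint (connectedComponent x) B₂ := by
    intro x hx
    rw [disjoint_left]
    intro y hy hyB₂
    set C : Set ℂ := Subtype.val '' connectedComponent x with hCdef
    have hCK : C ⊆ K := by rintro z ⟨w, _, rfl⟩; exact w.2
    have hCconn : IsConnected C :=
      ⟨⟨x, mem_image_of_mem _ mem_connectedComponent⟩,
        (isPreconnected_connectedComponent).image _ continuous_subtype_val.continuousOn⟩
    have hx' : f (x : ℂ) ≤ c₁ := hx
    have hy' : c₂ ≤ f (y : ℂ) := hyB₂
    have ivt : Icc (f (x : ℂ)) (f (y : ℂ)) ⊆ f '' C :=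
      hCconn.isPreconnected.intermediate_value
        (mem_image_of_mem _ mem_connectedComponent)
        (mem_image_of_mem _ hy) hfc.continuousOn
    refine hnoconn C hCK hCconn ⟨?_, ?_⟩
    · obtain ⟨p, hpC, hp⟩ := ivt ⟨hx', by linarith⟩
      exact ⟨p, hpC, hp⟩
    · obtain ⟨p, hpC, hp⟩ := ivt ⟨by linarith, hy'⟩
      exact ⟨p, hpC, hp⟩
  obtain ⟨V, hV, hB₁V, hVB₂⟩ := clopen_sep hB₁ hB₂ key
  refine ⟨Subtype.val '' V, Subtype.val '' Vᶜ, ?_, ?_, ?_, ?_, ?_, ?_⟩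
  · exact (hV.isClosed.isCompact).image continuous_subtype_val
  · exact (hV.compl.isClosed.isCompact).image continuous_subtype_val
  · exact (Set.disjoint_image_iff Subtype.val_injective).2 disjoint_compl_right
  · rw [← image_union, union_compl_self, image_univ, Subtype.range_val]
  · rintro z ⟨hz1, hz2⟩
    exact mem_image_of_mem _ (hB₁V (show (⟨z, hz2⟩ : K) ∈ B₁ from hz1))
  · rintro z ⟨hz1, hz2⟩
    exact ⟨⟨z, hz2⟩, disjoint_right.mp hVB₂ (show (⟨z, hz2⟩ : K) ∈ B₂ from hz1), rfl⟩
end
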